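/- arXiv:2103.15983 — 8 statements merged into one kernel-verified Lean document; each statement's English description precedes it below -/
import Mathlib

section
/- Let S be a generalized numerical semigroup in ℕ^d. Then the Frobenius allowable gaps of S are precisely the maximal elements of the gap set H(S) = ℕ^d \ S under the natural (componentwise) partial order on ℕ^d; that is, a gap F ∈ H(S) is Frobenius allowable if and only if there is no gap x ∈ H(S) with x ≠ F and F ≤ x componentwise. -/
open Finset

/-- A generalized numerical semigroup (GNS) in `ℕ^d`: contains `0`, is closed under
componentwise addition, and has finite complement. -/
def IsGNS {d : ℕ} (S : Set (Fin d → ℕ)) : Prop :=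
  (0 : Fin d → ℕ) ∈ S ∧ (∀ a ∈ S, ∀ b ∈ S, a + b ∈ S) ∧ Sᶜ.Finite

/-- A relaxed monomial order on `ℕ^d`: a (strict) total order `r` such that
`r v w → r v (w + u)` and `0` is below every nonzero element. -/
def IsRMO {d : ℕ} (r : (Fin d → ℕ) → (Fin d → ℕ) → Prop) : Prop :=
  IsStrictTotalOrder (Fin d → ℕ) r ∧
  (∀ v w u : Fin d → ℕ, r v w → r v (w + u)) ∧
  (∀ v : Fin d → ℕ, v ≠ 0 → r 0 v)

/-- `F` is the Frobenius gap of `S` with respect to the order `r`, i.e. the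
`r`-maximum of the gap set `ℕ^d \ S`. -/
def IsFrobGapWrt {d : ℕ} (S : Set (Fin d → ℕ))
    (r : (Fin d → ℕ) → (Fin d → ℕ) → Prop) (F : Fin d → ℕ) : Prop :=
  F ∉ S ∧ ∀ x, x ∉ S → x ≠ F → r x F

/-- `F` is a Frobenius allowable gap of `S`: it is the Frobenius gap with respect to
some relaxed monomial order. -/
def FrobAllowable {d : ℕ} (S : Set (Fin d → ℕ)) (F : Fin d → ℕ) : Prop :=
  ∃ r, IsRMO r ∧ IsFrobGapWrt S r F

/-- `F` is a maximal gap of `S` with respect to the natural (componentwise)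
partial order on `ℕ^d`. -/
def MaxGap {d : ℕ} (S : Set (Fin d → ℕ)) (F : Fin d → ℕ) : Prop :=
  F ∉ S ∧ ∀ x, x ∉ S → F ≤ x → x = F

/-- The set of Frobenius allowable gaps of `S`, i.e. the maximal elements of the gap
set under the natural partial order. -/
def FA {d : ℕ} (S : Set (Fin d → ℕ)) : Set (Fin d → ℕ) := {F | MaxGap S F}

/-- The set of pseudo-Frobenius gaps of `S`. -/
def PF {d : ℕ} (S : Set (Fin d → ℕ)) : Set (Fin d → ℕ) :=
  {P | P ∉ S ∧ ∀ s ∈ S, s ≠ 0 → P + s ∈ S}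

/-- `S` is quasi-irreducible: for every gap `x`, either `2x` is Frobenius allowable or
`F - x ∈ S` for some Frobenius allowable gap `F`. -/
def QuasiIrreducible {d : ℕ} (S : Set (Fin d → ℕ)) : Prop :=
  ∀ x, x ∉ S → (x + x ∈ FA S ∨ ∃ F ∈ FA S, ∃ s ∈ S, x + s = F)

/-- `S` is a Frobenius GNS with Frobenius gap `F`: the gap set has `F` as its unique
maximal element under the natural partial order. -/
def IsFrobeniusGNS {d : ℕ} (S : Set (Fin d → ℕ)) (F : Fin d → ℕ) : Prop :=
  IsGNS S ∧ MaxGap S F ∧ ∀ x, MaxGap S x → x = F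

/-- `‖F‖ = ∏ i (F^(i) + 1)`, the number of lattice points in the box `[0, F]`. -/
def normF {d : ℕ} (F : Fin d → ℕ) : ℕ := ∏ i, (F i + 1)

/-- `N(F)`: the number of Frobenius GNS in `ℕ^d` with Frobenius gap `F`. -/
noncomputable def NF {d : ℕ} (F : Fin d → ℕ) : ℕ :=
  {S : Set (Fin d → ℕ) | IsFrobeniusGNS S F}.ncard

/-! A relaxed monomial order `≺` never puts `F + u` below `F`, so a gap strictly above `F`
rules out `F` being the `≺`-maximal gap. Conversely, if no gap lies above `F`, every other gap
`x` has some coordinate `x i < F i`, so `∑ i, min (x i) (F i) < ∑ i, F i`. Ordering `ℕ^d`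
lexicographically by this truncated degree, then by total degree, then by an arbitrary
injective tie-break gives a linear order that is strictly monotone for the componentwise
order, hence a relaxed monomial order, and `F` is its largest gap. -/

open Function

theorem strictMono_toLex_of_monotone_of_strictMono {α β γ : Type*} [Preorder α]
    [PartialOrder β] [Preorder γ] {f : α → β} {g : α → γ} (hf : Monotone f)
    (hg : StrictMono g) : StrictMono fun x => toLex (f x, g x) :=
  fun _ _ hxy => Prod.Lex.toLex_lt_toLex'.2 ⟨hf hxy.le, fun _ => hg hxy⟩

theorem isRMO_of_strictMono {d : ℕ} {β : Type*} [LinearOrder β] {f : (Fin d → ℕ) → β}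
    (hinj : Injective f) (hf : StrictMono f) : IsRMO fun v w => f v < f w := by
  refine ⟨?_, fun v w u hvw => hvw.trans_le (hf.monotone le_self_add), fun v hv =>
    hf (pos_iff_ne_zero.2 hv)⟩
  exact
    { trichotomous := fun v w hvw hwv => hinj (le_antisymm (not_lt.1 hwv) (not_lt.1 hvw))
      irrefl := fun v => lt_irrefl (f v)
      trans := fun _ _ _ => lt_trans }

theorem IsRMO.not_le_of_rel {d : ℕ} {r : (Fin d → ℕ) → (Fin d → ℕ) → Prop} (hr : IsRMO r)
    {v w : Fin d → ℕ} (hwv : r w v) : ¬v ≤ w := by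
  intro hvw
  have hww : r w (v + (w - v)) := hr.2.1 w v (w - v) hwv
  rw [add_tsub_cancel_of_le hvw] at hww
  exact hr.1.irrefl w hww

theorem strictMono_sum_coord {ι : Type*} [Fintype ι] :
    StrictMono fun v : ι → ℕ => ∑ i, v i := by
  intro v w hvw
  obtain ⟨i, hi⟩ := Pi.lt_def.1 hvw |>.2
  exact Finset.sum_lt_sum (fun j _ => hvw.le j) ⟨i, Finset.mem_univ i, hi⟩

theorem sum_min_lt_sum_of_not_le {ι : Type*} [Fintype ι] {v F : ι → ℕ} (h : ¬F ≤ v) :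
    ∑ i, min (v i) (F i) < ∑ i, F i := by
  obtain ⟨i, hi⟩ : ∃ i, v i < F i := by simpa only [Pi.le_def, not_forall, not_le] using h
  exact Finset.sum_lt_sum (fun j _ => min_le_right _ _)
    ⟨i, Finset.mem_univ i, min_lt_of_left_lt hi⟩

def frobKey {d : ℕ} (F v : Fin d → ℕ) : ℕ ×ₗ (ℕ ×ₗ ℕ) :=
  toLex (∑ i, min (v i) (F i), toLex (∑ i, v i, Encodable.encode v))

theorem frobKey_injective {d : ℕ} (F : Fin d → ℕ) : Injective (frobKey F) := by
  intro v w h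
  simp only [frobKey, toLex_inj, Prod.mk.injEq] at h
  exact Encodable.encode_injective h.2.2

theorem frobKey_strictMono {d : ℕ} (F : Fin d → ℕ) : StrictMono (frobKey F) :=
  strictMono_toLex_of_monotone_of_strictMono
    (fun _ _ hvw => Finset.sum_le_sum fun i _ => min_le_min_right _ (hvw i))
    fun _ _ hvw => Prod.Lex.toLex_lt_toLex.2 (Or.inl (strictMono_sum_coord hvw))

theorem frobKey_lt_of_not_le {d : ℕ} {F v : Fin d → ℕ} (h : ¬F ≤ v) :
    frobKey F v < frobKey F F := by
  refine Prod.Lex.toLex_lt_toLex.2 (Or.inl ?_)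
  simpa only [min_self] using sum_min_lt_sum_of_not_le h

theorem frobenius_allowable_iff_maximal_general {d : ℕ} (S : Set (Fin d → ℕ))
    (F : Fin d → ℕ) (hF : F ∉ S) :
    FrobAllowable S F ↔ ¬∃ x, x ∉ S ∧ x ≠ F ∧ F ≤ x := by
  constructor
  · rintro ⟨r, hr, -, hmax⟩ ⟨x, hxS, hxF, hFx⟩
    exact hr.not_le_of_rel (hmax x hxS hxF) hFx
  · intro hmaximal
    refine ⟨_, isRMO_of_strictMono (frobKey_injective F) (frobKey_strictMono F), hF,
      fun x hxS hxF => frobKey_lt_of_not_le fun hFx => hmaximal ⟨x, hxS, hxF, hFx⟩⟩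

/-- The Frobenius allowable gaps of a GNS are precisely the maximal elements of the
gap set under the natural partial order. -/
theorem frobenius_allowable_iff_maximal {d : ℕ} (S : Set (Fin d → ℕ)) (hS : IsGNS S)
    (F : Fin d → ℕ) (hF : F ∉ S) :
    FrobAllowable S F ↔ ¬∃ x, x ∉ S ∧ x ≠ F ∧ F ≤ x :=
  frobenius_allowable_iff_maximal_general S F hF
end

section
/- Let S be a generalized numerical semigroup in ℕ^d. The following are equivalent: (i) the Frobenius gap F_≺(S) is the same for every relaxed monomial order ≺ on ℕ^d (i.e. S is a Frobenius GNS); (ii) the gap set H(S) has a unique maximal element with respect to the natural partial order; (iii) the set PF(S) of pseudo-Frobenius gaps has a unique maximal element with respect to the natural partial order. -/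
/-!
Every relaxed monomial order `≺` refines the componentwise order: if `w ≺ v` with `v ≤ w`,
then `w ≺ v + (w - v) = w`. So a greatest gap is the Frobenius gap for every `≺`. Conversely,
comparing coordinate `i` first gives a relaxed monomial order, so a gap that is Frobenius for every
order dominates every other gap in each coordinate. As `H(S)` is finite, every gap lies below a
maximal one, so a unique maximal gap is the greatest gap. Finally, the maximal gaps are exactly the
maximal pseudo-Frobenius gaps: a maximal gap `F` is pseudo-Frobenius because no `F + s` with
`s ≠ 0` can be a gap, and a gap above a maximal pseudo-Frobenius gap lies below a maximal gap,
hence equals it.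
-/

open Finset

namespace IsRMO

variable {d : ℕ}

theorem of_injective_of_monotone {β : Type*} [LinearOrder β] {f : (Fin d → ℕ) → β}
    (hinj : Function.Injective f) (hmono : Monotone f) : IsRMO (fun v w => f v < f w) := by
  refine ⟨hinj.isStrictTotalOrder_onFun _, fun v w u hvw => ?_, fun v hv => ?_⟩
  · exact hvw.trans_le (hmono le_self_add)
  · exact (hmono (zero_le (a := v))).lt_of_ne (hinj.ne hv.symm)

theorem lex : IsRMO (fun v w : Fin d → ℕ => toLex v < toLex w) :=
  of_injective_of_monotone toLex.injective Pi.toLex_monotone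

def coordFirstLex (i : Fin d) (v : Fin d → ℕ) : ℕ ×ₗ Lex (Fin d → ℕ) := toLex (v i, toLex v)

theorem coordFirstLex_isRMO (i : Fin d) :
    IsRMO (fun v w => coordFirstLex i v < coordFirstLex i w) :=
  of_injective_of_monotone (fun _ _ h => toLex.injective (congrArg (fun p => (ofLex p).2) h))
    (Prod.Lex.toLex_mono.comp ((Function.monotone_eval i).prodMk Pi.toLex_monotone))

theorem apply_le_of_coordFirstLex_lt {i : Fin d} {v w : Fin d → ℕ}
    (h : coordFirstLex i v < coordFirstLex i w) : v i ≤ w i :=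
  Prod.Lex.monotone_fst _ _ h.le

theorem rel_of_lt {r : (Fin d → ℕ) → (Fin d → ℕ) → Prop} (hr : IsRMO r) {v w : Fin d → ℕ}
    (hvw : v < w) : r v w := by
  have := hr.1
  rcases trichotomous_of r v w with h | rfl | h
  · exact h
  · exact absurd hvw (lt_irrefl v)
  · have := hr.2.1 w v (w - v) h
    rw [add_tsub_cancel_of_le hvw.le] at this
    exact absurd this (irrefl w)

end IsRMO

section Gaps

variable {d : ℕ} {S : Set (Fin d → ℕ)} {F : Fin d → ℕ}

theorem forall_isFrobGapWrt_iff_isGreatest :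
    (∀ r, IsRMO r → IsFrobGapWrt S r F) ↔ IsGreatest Sᶜ F := by
  refine ⟨fun hF => ⟨(hF _ IsRMO.lex).1, fun x hx => ?_⟩,
    fun hF r hr => ⟨hF.1, fun x hx hxF => hr.rel_of_lt ((hF.2 hx).lt_of_ne hxF)⟩⟩
  obtain rfl | hxF := eq_or_ne x F
  · exact le_rfl
  · exact fun i => IsRMO.apply_le_of_coordFirstLex_lt
      ((hF _ (IsRMO.coordFirstLex_isRMO i)).2 x hx hxF)

theorem exists_maxGap_ge (hfin : Sᶜ.Finite) {x : Fin d → ℕ} (hx : x ∉ S) :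
    ∃ G, x ≤ G ∧ MaxGap S G := by
  obtain ⟨G, hxG, hG⟩ := hfin.exists_le_maximal hx
  exact ⟨G, hxG, hG.1, fun y hy hGy => (hG.2 hy hGy).antisymm hGy⟩

theorem existsUnique_maxGap_iff_exists_isGreatest (hfin : Sᶜ.Finite) :
    (∃! F, MaxGap S F) ↔ ∃ F, IsGreatest Sᶜ F := by
  constructor
  · rintro ⟨F, hF, huniq⟩
    refine ⟨F, hF.1, fun x hx => ?_⟩
    obtain ⟨G, hxG, hG⟩ := exists_maxGap_ge hfin hx
    exact huniq G hG ▸ hxG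
  · rintro ⟨F, hFS, hFub⟩
    exact ⟨F, ⟨hFS, fun x hx hFx => (hFub hx).antisymm hFx⟩,
      fun G hG => (hG.2 F hFS (hFub hG.1)).symm⟩

theorem MaxGap.mem_PF (hF : MaxGap S F) : F ∈ PF S := by
  refine ⟨hF.1, fun s _ hs0 => by_contra fun hFs => hs0 ?_⟩
  simpa using hF.2 (F + s) hFs le_self_add

theorem maxGap_iff_maximal_PF (hfin : Sᶜ.Finite) :
    MaxGap S F ↔ F ∈ PF S ∧ ∀ Q ∈ PF S, F ≤ Q → Q = F := by
  refine ⟨fun hF => ⟨hF.mem_PF, fun Q hQ => hF.2 Q hQ.1⟩, fun ⟨hF, hmax⟩ => ⟨hF.1, ?_⟩⟩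
  intro x hx hFx
  obtain ⟨G, hxG, hG⟩ := exists_maxGap_ge hfin hx
  have hGF : G = F := hmax G hG.mem_PF (hFx.trans hxG)
  exact (hGF ▸ hxG).antisymm hFx

end Gaps

/-- For a GNS `S`, the following are equivalent: (i) the Frobenius gap is the same for
every relaxed monomial order; (ii) the gap set has a unique maximal element under the
natural partial order; (iii) `PF(S)` has a unique maximal element under the natural
partial order. -/
theorem frobeniusGNS_tfae {d : ℕ} (S : Set (Fin d → ℕ)) (hS : IsGNS S) :
    ((∃ F : Fin d → ℕ, ∀ r, IsRMO r → IsFrobGapWrt S r F) ↔ (∃! F, MaxGap S F)) ∧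
    ((∃! F, MaxGap S F) ↔
      (∃! P, P ∈ PF S ∧ ∀ Q ∈ PF S, P ≤ Q → Q = P)) := by
  have hfin : Sᶜ.Finite := hS.2.2
  refine ⟨?_, existsUnique_congr fun F => maxGap_iff_maximal_PF hfin⟩
  rw [existsUnique_maxGap_iff_exists_isGreatest hfin]
  exact exists_congr fun F => forall_isFrobGapWrt_iff_isGreatest
end

section
/- Let S be a generalized numerical semigroup in ℕ^d. Then τ(S) ≤ t(S), and moreover τ(S) = t(S) if and only if for every gap x ∈ H(S) there exists a Frobenius allowable gap F ∈ FA(S) with F − x ∈ S. -/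
open Finset

/-!
A maximal gap `F` is pseudo-Frobenius, since `F + s` is a strictly larger element for `s ≠ 0`.
Conversely every gap `x` lies below a pseudo-Frobenius gap in the sense `P - x ∈ S`: take `P`
maximal among the finitely many gaps of the form `x + s` with `s ∈ S`. Hence `τ(S) = t(S)` iff
every pseudo-Frobenius gap is maximal, and this is the stated condition because a
pseudo-Frobenius gap `P` can satisfy `F - P ∈ S` for a gap `F` only with `F = P`.
-/

section

variable {d : ℕ} {S : Set (Fin d → ℕ)}

theorem FA_subset_PF : FA S ⊆ PF S := by
  rintro F ⟨hF, hmax⟩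
  refine ⟨hF, fun s _ hs0 => ?_⟩
  by_contra hFs
  exact hs0 (add_eq_left.mp (hmax _ hFs le_self_add))

theorem PF_finite (hfin : Sᶜ.Finite) : (PF S).Finite :=
  hfin.subset fun _ hP => hP.1

theorem exists_mem_PF_add_eq (hS : IsGNS S) {x : Fin d → ℕ} (hx : x ∉ S) :
    ∃ P ∈ PF S, ∃ s ∈ S, x + s = P := by
  obtain ⟨h0, hadd, hfin⟩ := hS
  set T := {y | y ∉ S ∧ ∃ s ∈ S, x + s = y}
  have hT : T.Finite := hfin.subset fun _ hy => hy.1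
  obtain ⟨_, ⟨hxs, s, hs, rfl⟩, hmax⟩ := hT.exists_maximal ⟨x, hx, 0, h0, add_zero x⟩
  refine ⟨x + s, ⟨hxs, fun t ht ht0 => ?_⟩, s, hs, rfl⟩
  by_contra hxst
  have hxstT : x + s + t ∈ T := ⟨hxst, s + t, hadd s hs t ht, (add_assoc x s t).symm⟩
  exact ht0 (add_eq_left.mp (le_antisymm (hmax hxstT le_self_add) le_self_add))

theorem eq_of_mem_PF_of_add_eq {P F s : Fin d → ℕ} (hP : P ∈ PF S) (hF : F ∉ S) (hs : s ∈ S)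
    (hPs : P + s = F) : P = F := by
  by_cases hs0 : s = 0
  · rwa [hs0, add_zero] at hPs
  · exact absurd (hPs ▸ hP.2 s hs hs0) hF

theorem PF_subset_FA_iff (hS : IsGNS S) :
    PF S ⊆ FA S ↔ ∀ x, x ∉ S → ∃ F ∈ FA S, ∃ s ∈ S, x + s = F := by
  constructor
  · intro hPF x hx
    obtain ⟨P, hP, hxP⟩ := exists_mem_PF_add_eq hS hx
    exact ⟨P, hPF hP, hxP⟩
  · intro h P hP
    obtain ⟨F, hF, s, hs, hPs⟩ := h P hP.1
    rwa [eq_of_mem_PF_of_add_eq hP hF.1 hs hPs]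

end

/-- `τ(S) ≤ t(S)`, with equality iff for every gap `x` there is a Frobenius allowable
gap `F` with `F - x ∈ S`. -/
theorem tau_le_type_and_eq_iff {d : ℕ} (S : Set (Fin d → ℕ)) (hS : IsGNS S) :
    (FA S).ncard ≤ (PF S).ncard ∧
    ((FA S).ncard = (PF S).ncard ↔
      ∀ x, x ∉ S → ∃ F ∈ FA S, ∃ s ∈ S, x + s = F) := by
  have hfin := PF_finite hS.2.2
  refine ⟨Set.ncard_le_ncard FA_subset_PF hfin, ?_⟩
  rw [← PF_subset_FA_iff hS]
  constructor
  · intro hcard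
    exact (Set.eq_of_subset_of_ncard_le FA_subset_PF hcard.ge hfin).symm.subset
  · intro hPF
    rw [FA_subset_PF.antisymm hPF]
end

section
/- A generalized numerical semigroup S ⊆ ℕ^d is quasi-irreducible if and only if for every pseudo-Frobenius gap P ∈ PF(S), either P ∈ FA(S) or 2P ∈ FA(S). -/
open Finset

/-!
Every gap `x` lies below a pseudo-Frobenius gap `P` with `P - x ∈ S`: take a maximal gap
among the gaps of the form `x + s`, `s ∈ S`. If `P ∉ FA(S)` but `2P ∈ FA(S)`, then either
`P = x`, or `P - x ≠ 0` and `2P - x = P + (P - x) ∈ S` since `P` is pseudo-Frobenius.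
Conversely, a pseudo-Frobenius gap `P` can only reach an element of `FA(S)` by adding `0`.
-/

variable {d : ℕ} {S : Set (Fin d → ℕ)}

lemma eq_zero_of_mem_PF_of_add_mem_FA {P s : Fin d → ℕ} (hP : P ∈ PF S) (hs : s ∈ S)
    (hPs : P + s ∈ FA S) : s = 0 := by
  by_contra hs0
  exact hPs.1 (hP.2 s hs hs0)

lemma exists_add_mem_PF (hS : IsGNS S) {x : Fin d → ℕ} (hx : x ∉ S) :
    ∃ s ∈ S, x + s ∈ PF S := by
  obtain ⟨hS0, hSadd, hSfin⟩ := hS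
  let B : Set (Fin d → ℕ) := {z | z ∉ S ∧ ∃ s ∈ S, x + s = z}
  have hBfin : B.Finite := hSfin.subset fun _ hz => hz.1
  obtain ⟨_, ⟨hyS, s, hs, rfl⟩, hmax⟩ :=
    hBfin.exists_maximal ⟨x, hx, 0, hS0, add_zero x⟩
  refine ⟨s, hs, hyS, fun t ht ht0 => ?_⟩
  by_contra hyt
  have hle : x + s + t ≤ x + s :=
    hmax ⟨hyt, s + t, hSadd s hs t ht, (add_assoc x s t).symm⟩ le_self_add
  exact ht0 (le_antisymm (by simpa using hle) zero_le)

/-- A GNS is quasi-irreducible iff every pseudo-Frobenius gap `P` satisfies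
`P ∈ FA(S)` or `2P ∈ FA(S)`. -/
theorem quasiIrreducible_iff_pf {d : ℕ} (S : Set (Fin d → ℕ)) (hS : IsGNS S) :
    QuasiIrreducible S ↔ ∀ P ∈ PF S, P ∈ FA S ∨ P + P ∈ FA S := by
  constructor
  · intro hQI P hP
    rcases hQI P hP.1 with hPP | ⟨F, hF, s, hs, rfl⟩
    · exact Or.inr hPP
    · obtain rfl := eq_zero_of_mem_PF_of_add_mem_FA hP hs hF
      simpa using Or.inl hF
  · intro h x hx
    obtain ⟨s, hs, hP⟩ := exists_add_mem_PF hS hx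
    rcases h _ hP with hFA | hFA2
    · exact Or.inr ⟨_, hFA, s, hs, rfl⟩
    rcases eq_or_ne s 0 with rfl | hs0
    · simpa using Or.inl hFA2
    · exact Or.inr ⟨_, hFA2, x + s + s, hP.2 s hs hs0, by abel⟩
end

section
/- If S ⊆ ℕ^d is a quasi-irreducible generalized numerical semigroup, then τ(S) ≤ t(S) ≤ 2·τ(S). -/
open Finset

/-- For a quasi-irreducible GNS, `τ(S) ≤ t(S) ≤ 2τ(S)`. -/
theorem tau_le_type_le_two_tau {d : ℕ} (S : Set (Fin d → ℕ)) (hS : IsGNS S)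
    (hq : QuasiIrreducible S) :
    (FA S).ncard ≤ (PF S).ncard ∧ (PF S).ncard ≤ 2 * (FA S).ncard := by
  obtain ⟨h0, hadd, hfin⟩ := hS
  have hFAfin : (FA S).Finite := hfin.subset fun F hF => hF.1
  have hPFfin : (PF S).Finite := hfin.subset fun P hP => hP.1
  -- FA ⊆ PF
  have h1 : FA S ⊆ PF S := by
    intro F hF
    refine ⟨hF.1, ?_⟩
    intro s hs hs0
    by_contra h
    have hle : F ≤ F + s := fun i => Nat.le_add_right _ _
    have heq := hF.2 _ h hle
    apply hs0
    funext i
    have := congrFun heq i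
    simpa using this
  refine ⟨Set.ncard_le_ncard h1 hPFfin, ?_⟩
  set B : Set (Fin d → ℕ) := {P | P ∈ PF S ∧ P + P ∈ FA S} with hB
  have hBfin : B.Finite := hPFfin.subset fun P hP => hP.1
  have hsub : PF S ⊆ FA S ∪ B := by
    intro P hP
    rcases hq P hP.1 with h | ⟨F, hF, s, hs, hPs⟩
    · exact Or.inr ⟨hP, h⟩
    · left
      by_cases hs0 : s = 0
      · subst hs0
        rw [add_zero] at hPs
        exact hPs ▸ hF
      · exact absurd (hPs ▸ hP.2 s hs hs0) hF.1
  have hinj : Set.InjOn (fun x : Fin d → ℕ => x + x) B := by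
    intro a _ b _ hab
    funext i
    have := congrFun hab i
    simp only [Pi.add_apply] at this
    omega
  have himg : (fun x : Fin d → ℕ => x + x) '' B ⊆ FA S := by
    rintro _ ⟨P, hP, rfl⟩
    exact hP.2
  have hBcard : B.ncard ≤ (FA S).ncard := by
    rw [← Set.ncard_image_of_injOn hinj]
    exact Set.ncard_le_ncard himg hFAfin
  calc (PF S).ncard ≤ (FA S ∪ B).ncard :=
        Set.ncard_le_ncard hsub (hFAfin.union hBfin)
    _ ≤ (FA S).ncard + B.ncard := Set.ncard_union_le _ _
    _ ≤ (FA S).ncard + (FA S).ncard := by omega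
    _ = 2 * (FA S).ncard := by ring
end

section
/- Let S ⊆ ℕ^d be a Frobenius generalized numerical semigroup with Frobenius gap F = F(S), and let T(S) = {x ∈ ℕ^d | F − x ∈ (ℤ^d \ S) ∪ {0}}, where the difference F − x is taken in ℤ^d and S is regarded as a subset of ℤ^d. Then S is almost symmetric, i.e. t(S) = 2·g(S) + 1 − ‖F‖, if and only if T(S) is a generalized numerical semigroup. -/
open Finset

/-- The set `T(S) = {x ∈ ℕ^d ∣ F - x ∈ (ℤ^d \ S) ∪ {0}}`, where the difference is
taken in `ℤ^d` and `S` is regarded as a subset of `ℤ^d`. -/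
def TSet {d : ℕ} (S : Set (Fin d → ℕ)) (F : Fin d → ℕ) : Set (Fin d → ℕ) :=
  {x | (fun i => (F i : ℤ) - (x i : ℤ)) ∈
      ((fun (s : Fin d → ℕ) => (fun i => (s i : ℤ))) '' S)ᶜ ∪ {0}}

/-!
Write `T = TSet S F`. Unfolding the definition, `x ∈ T` iff `F ∉ x + (S \ {0})`, so `S ⊆ T` and
every pseudo-Frobenius gap lies in `T \ S`; moreover `T` is a GNS exactly when `T \ S ⊆ PF S`.
The reflection `x ↦ F - x` of the box `[0, F]`, which contains every gap, carries the nonzero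
elements of `S` in the box onto `Tᶜ`. Counting the box as `(S ∩ [0, F]) ⊔ Sᶜ` and the gaps as
`(T \ S) ⊔ Tᶜ` gives `|T \ S| = 2 g(S) + 1 - ‖F‖`, so the type equals this number iff
`PF S = T \ S`.
-/

section TSet

variable {d : ℕ} {S : Set (Fin d → ℕ)} {F : Fin d → ℕ}

theorem mem_TSet_iff {x : Fin d → ℕ} : x ∈ TSet S F ↔ ∀ s ∈ S, x + s = F → s = 0 := by
  have hcast : ∀ s : Fin d → ℕ,
      ((fun i => (s i : ℤ)) = fun i => (F i : ℤ) - x i) ↔ x + s = F := by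
    intro s
    simp only [funext_iff, Pi.add_apply]
    exact forall_congr' fun i => by omega
  have hzero : ((fun i => (F i : ℤ) - x i) = 0) ↔ x = F := by
    simp only [funext_iff, Pi.zero_apply]
    exact forall_congr' fun i => by omega
  simp only [TSet, Set.mem_ofPred_eq, Set.mem_union, Set.mem_compl_iff, Set.mem_image,
    Set.mem_singleton_iff, hcast, hzero, not_exists, not_and]
  constructor
  · rintro (hnone | rfl) s hs hsum
    · exact absurd hsum (hnone s hs)
    · exact add_eq_left.mp hsum
  · intro hT
    by_cases hex : ∃ s ∈ S, x + s = F
    · obtain ⟨s, hs, hsum⟩ := hex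
      right
      rwa [hT s hs hsum, add_zero] at hsum
    · push Not at hex
      exact Or.inl hex

theorem notMem_TSet_iff {x : Fin d → ℕ} : x ∉ TSet S F ↔ ∃ s ∈ S, s ≠ 0 ∧ x + s = F := by
  simp only [mem_TSet_iff, not_forall, exists_prop]
  exact exists_congr fun s => by tauto

theorem compl_TSet_subset_Iic : (TSet S F)ᶜ ⊆ Set.Iic F := by
  intro x hx
  obtain ⟨s, -, -, rfl⟩ := notMem_TSet_iff.mp hx
  exact Set.mem_Iic.mpr le_self_add

theorem subset_TSet (hadd : ∀ a ∈ S, ∀ b ∈ S, a + b ∈ S) (hF : F ∉ S) : S ⊆ TSet S F :=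
  fun x hx => mem_TSet_iff.mpr fun s hs hsum => absurd (hsum ▸ hadd x hx s hs) hF

theorem PF_subset_TSet_diff (hF : F ∉ S) : PF S ⊆ TSet S F \ S := by
  refine fun P hP => ⟨mem_TSet_iff.mpr fun s hs hsum => ?_, hP.1⟩
  by_contra hs0
  exact hF (hsum ▸ hP.2 s hs hs0)

theorem add_mem_TSet_of_mem_PF {P y : Fin d → ℕ} (hP : P ∈ PF S) (hy : y ∈ TSet S F) :
    P + y ∈ TSet S F := by
  refine mem_TSet_iff.mpr fun s hs hsum => ?_
  by_contra hs0
  have hPs : P + s = 0 :=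
    mem_TSet_iff.mp hy (P + s) (hP.2 s hs hs0) (by rw [← hsum]; abel)
  exact hs0 (add_eq_zero.mp hPs).2

theorem ncard_Iic_eq_normF : (Set.Iic F).ncard = normF F := by
  classical
  rw [← Finset.coe_Iic, Set.ncard_coe_finset, Pi.card_Iic]
  simp [normF, Nat.card_Iic]

theorem ncard_inter_Iic_add_ncard_compl (hgaps : Sᶜ ⊆ Set.Iic F) :
    (S ∩ Set.Iic F).ncard + Sᶜ.ncard = normF F := by
  have hdiff : Set.Iic F \ S = Sᶜ := by
    rw [Set.sdiff_eq, Set.inter_eq_right.mpr hgaps]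
  rw [← hdiff, Set.inter_comm, Set.ncard_inter_add_ncard_sdiff_eq_ncard _ _ (Set.finite_Iic F),
    ncard_Iic_eq_normF]

theorem compl_TSet_eq_image : (TSet S F)ᶜ = (F - ·) '' ((S ∩ Set.Iic F) \ {0}) := by
  ext x
  simp only [Set.mem_compl_iff, notMem_TSet_iff, Set.mem_image, Set.mem_sdiff,
    Set.mem_inter_iff, Set.mem_Iic, Set.mem_singleton_iff]
  constructor
  · rintro ⟨s, hs, hs0, rfl⟩
    exact ⟨s, ⟨⟨hs, le_add_self⟩, hs0⟩, add_tsub_cancel_right x s⟩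
  · rintro ⟨s, ⟨⟨hs, hsF⟩, hs0⟩, rfl⟩
    exact ⟨s, hs, hs0, tsub_add_cancel_of_le hsF⟩

theorem ncard_compl_TSet_add_one (h0 : 0 ∈ S) :
    (TSet S F)ᶜ.ncard + 1 = (S ∩ Set.Iic F).ncard := by
  have h0' : 0 ∈ S ∩ Set.Iic F := ⟨h0, Set.mem_Iic.mpr zero_le⟩
  have hinj : Set.InjOn (F - ·) ((S ∩ Set.Iic F) \ {0}) :=
    fun a ha b hb hab => (tsub_right_inj ha.1.2 hb.1.2).mp hab
  rw [compl_TSet_eq_image, hinj.ncard_image,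
    Set.ncard_sdiff_singleton_add_one h0' ((Set.finite_Iic F).inter_of_right S)]

theorem ncard_TSet_diff_add_ncard_compl (hST : S ⊆ TSet S F) (hfin : Sᶜ.Finite) :
    (TSet S F \ S).ncard + (TSet S F)ᶜ.ncard = Sᶜ.ncard := by
  rw [← compl_sdiff_compl]
  exact Set.ncard_sdiff_add_ncard_of_subset (Set.compl_subset_compl.mpr hST) hfin

end TSet

namespace IsFrobeniusGNS

variable {d : ℕ} {S : Set (Fin d → ℕ)} {F : Fin d → ℕ}

theorem le_of_notMem (h : IsFrobeniusGNS S F) {x : Fin d → ℕ} (hx : x ∉ S) : x ≤ F := by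
  obtain ⟨m, hxm, hm⟩ := h.1.2.2.exists_le_maximal (Set.mem_compl hx)
  exact h.2.2 m ⟨hm.prop, fun y hy hmy => (hm.eq_of_le hy hmy).symm⟩ ▸ hxm

theorem TSet_diff_subset_PF (h : IsFrobeniusGNS S F)
    (hadd : ∀ a ∈ TSet S F, ∀ b ∈ TSet S F, a + b ∈ TSet S F) : TSet S F \ S ⊆ PF S := by
  refine fun x hx => ⟨hx.2, fun s hs hs0 => ?_⟩
  by_contra hxs
  obtain ⟨y, hy⟩ := exists_add_of_le (h.le_of_notMem hxs)
  -- `y = F - (x + s)` lies in `T`, hence so does `x + y = F - s`, which is impossible as `s ≠ 0`.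
  have hyT : y ∈ TSet S F := mem_TSet_iff.mpr fun s' hs' hsum => by
    have hs'eq : s' = x + s := add_left_cancel (hsum.trans (hy.trans (add_comm _ _)))
    exact absurd (hs'eq ▸ hs') hxs
  exact hs0 (mem_TSet_iff.mp (hadd x hx.1 y hyT) s hs (by rw [hy]; abel))

theorem isGNS_TSet_iff (h : IsFrobeniusGNS S F) : IsGNS (TSet S F) ↔ TSet S F \ S ⊆ PF S := by
  have hST : S ⊆ TSet S F := subset_TSet h.1.2.1 h.2.1.1
  refine ⟨fun hT => h.TSet_diff_subset_PF hT.2.1, fun hPF => ?_⟩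
  refine ⟨hST h.1.1, fun a ha b hb => ?_, (Set.finite_Iic F).subset compl_TSet_subset_Iic⟩
  by_cases haS : a ∈ S
  · by_cases hbS : b ∈ S
    · exact hST (h.1.2.1 a haS b hbS)
    · exact add_comm b a ▸ add_mem_TSet_of_mem_PF (hPF ⟨hb, hbS⟩) ha
  · exact add_mem_TSet_of_mem_PF (hPF ⟨ha, haS⟩) hb

theorem ncard_TSet_diff_add_normF (h : IsFrobeniusGNS S F) :
    (TSet S F \ S).ncard + normF F = 2 * Sᶜ.ncard + 1 := by
  have hbox := ncard_inter_Iic_add_ncard_compl fun _ hx => h.le_of_notMem hx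
  have hrefl := ncard_compl_TSet_add_one (F := F) h.1.1
  have hgaps := ncard_TSet_diff_add_ncard_compl (subset_TSet h.1.2.1 h.2.1.1) h.1.2.2
  omega

end IsFrobeniusGNS

/-- A Frobenius GNS `S` with Frobenius gap `F` is almost symmetric, i.e.
`t(S) = 2g(S) + 1 - ‖F‖`, iff `T(S)` is a GNS. -/
theorem almostSymmetric_iff_TSet_isGNS {d : ℕ} (S : Set (Fin d → ℕ)) (F : Fin d → ℕ)
    (h : IsFrobeniusGNS S F) :
    (((PF S).ncard : ℤ) = 2 * (Sᶜ.ncard : ℤ) + 1 - (normF F : ℤ)) ↔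
      IsGNS (TSet S F) := by
  have hPF : PF S ⊆ TSet S F \ S := PF_subset_TSet_diff h.2.1.1
  have hfin : (TSet S F \ S).Finite := h.1.2.2.subset fun _ hx => hx.2
  have hcount := h.ncard_TSet_diff_add_normF
  rw [h.isGNS_TSet_iff]
  constructor
  · intro htype
    exact (Set.eq_of_subset_of_ncard_le hPF (by omega) hfin).symm.subset
  · intro hsub
    rw [hPF.antisymm hsub]
    omega
end

section
/- For every nonzero F ∈ ℕ^5 we have (√2)^{F^(1)·F^(2)·F^(3)·F^(4)·F^(5)} ≤ N(F). -/
open Finset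

/-!
Fix a coordinate, say the first. Inside the box `[0, F]`, the points `x` with `F 0 < 2 x 0`
form a set `B` no two of whose elements (repetitions allowed) sum to a point of the box.
Hence for every `A ⊆ B \ {F}` the set `{0} ∪ A ∪ (ℕ^d \ [0, F])` is closed under addition;
it is a Frobenius GNS with Frobenius gap `F`, and it determines `A`. This gives
`N(F) ≥ 2 ^ (|B| - 1)`, where `|B| = ⌈F 0 / 2⌉ ∏_{i > 0} (F i + 1)`, and
`2 (|B| - 1) ≥ ∏ i, F i` as soon as `d ≥ 2`.
-/

section Semigroups

variable {d : ℕ}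

theorem IsFrobeniusGNS.le_of_notMem_s12 {S : Set (Fin d → ℕ)} {F x : Fin d → ℕ}
    (hS : IsFrobeniusGNS S F) (hx : x ∉ S) : x ≤ F := by
  obtain ⟨⟨-, -, hfin⟩, -, huniq⟩ := hS
  obtain ⟨m, ⟨hmS, hxm⟩, hmax⟩ :=
    (hfin.inter_of_left {y | x ≤ y}).exists_maximal ⟨x, hx, le_refl x⟩
  have hm : MaxGap S m := ⟨hmS, fun y hy hmy => (hmax ⟨hy, hxm.trans hmy⟩ hmy).antisymm hmy⟩
  exact huniq m hm ▸ hxm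

theorem setOf_isFrobeniusGNS_finite (F : Fin d → ℕ) :
    {S : Set (Fin d → ℕ) | IsFrobeniusGNS S F}.Finite := by
  refine Set.Finite.of_finite_image ?_ compl_injective.injOn
  refine (Set.finite_Icc 0 F).finite_subsets.subset ?_
  rintro _ ⟨S, hS, rfl⟩ x hx
  exact ⟨zero_le, hS.le_of_notMem_s12 hx⟩

def boxGNS (F : Fin d → ℕ) (A : Set (Fin d → ℕ)) : Set (Fin d → ℕ) :=
  {x | x = 0 ∨ x ∈ A ∨ ¬ x ≤ F}

variable {F : Fin d → ℕ} {A : Set (Fin d → ℕ)}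

theorem notMem_boxGNS_iff {x : Fin d → ℕ} : x ∉ boxGNS F A ↔ x ≠ 0 ∧ x ∉ A ∧ x ≤ F := by
  simp only [boxGNS, Set.mem_ofPred_eq, not_or, not_not]

theorem add_mem_boxGNS (hA : ∀ a ∈ A, ∀ b ∈ A, ¬ a + b ≤ F) {a b : Fin d → ℕ}
    (ha : a ∈ boxGNS F A) (hb : b ∈ boxGNS F A) : a + b ∈ boxGNS F A := by
  rcases ha with rfl | ha | ha
  · simpa using hb
  rcases hb with rfl | hb | hb
  · rw [add_zero]; exact Or.inr (Or.inl ha)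
  all_goals refine Or.inr (Or.inr fun hab => ?_)
  · exact hA a ha b hb hab
  · exact hb (le_add_self.trans hab)
  all_goals exact ha (le_self_add.trans hab)

theorem isFrobeniusGNS_boxGNS (hF : F ≠ 0) (hA : ∀ a ∈ A, ∀ b ∈ A, ¬ a + b ≤ F)
    (hFA : F ∉ A) : IsFrobeniusGNS (boxGNS F A) F := by
  have hFgap : F ∉ boxGNS F A := notMem_boxGNS_iff.2 ⟨hF, hFA, le_rfl⟩
  refine ⟨⟨Or.inl rfl, fun a ha b hb => add_mem_boxGNS hA ha hb, ?_⟩, ⟨hFgap, ?_⟩, ?_⟩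
  · exact (Set.finite_Icc 0 F).subset fun x hx => ⟨zero_le, (notMem_boxGNS_iff.1 hx).2.2⟩
  · exact fun x hx hFx => (notMem_boxGNS_iff.1 hx).2.2.antisymm hFx
  · exact fun x ⟨hx, hmax⟩ => (hmax F hFgap (notMem_boxGNS_iff.1 hx).2.2).symm

theorem boxGNS_injOn : Set.InjOn (boxGNS F) {A | ∀ x ∈ A, x ≠ 0 ∧ x ≤ F} := by
  have hrecover : ∀ A, (∀ x ∈ A, x ≠ 0 ∧ x ≤ F) → {x | x ≠ 0 ∧ x ≤ F ∧ x ∈ boxGNS F A} = A := by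
    intro A hA
    ext x
    constructor
    · rintro ⟨hx0, hxF, rfl | hxA | hxF'⟩
      exacts [absurd rfl hx0, hxA, absurd hxF hxF']
    · exact fun hxA => ⟨(hA x hxA).1, (hA x hxA).2, Or.inr (Or.inl hxA)⟩
  intro A hA A' hA' h
  rw [← hrecover A hA, ← hrecover A' hA', h]

theorem two_pow_ncard_le_NF (hF : F ≠ 0) {B : Set (Fin d → ℕ)} (hBF : ∀ x ∈ B, x ≤ F)
    (hB : ∀ a ∈ B, ∀ b ∈ B, ¬ a + b ≤ F) (hFB : F ∉ B) : 2 ^ B.ncard ≤ NF F := by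
  have hBfin : B.Finite := (Set.finite_Icc 0 F).subset fun x hx => ⟨zero_le, hBF x hx⟩
  rw [← Set.ncard_powerset B hBfin]
  refine Set.ncard_le_ncard_of_injOn (boxGNS F) ?_ ?_ (setOf_isFrobeniusGNS_finite F)
  · intro A hAB
    exact isFrobeniusGNS_boxGNS hF (fun a ha b hb => hB a (hAB ha) b (hAB hb))
      fun hFA => hFB (hAB hFA)
  · have h0B : (0 : Fin d → ℕ) ∉ B := fun h0 => hB 0 h0 0 h0 (by simp)
    refine boxGNS_injOn.mono fun A (hAB : A ⊆ B) => ?_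
    exact fun x hx => ⟨fun hx0 => h0B (hx0 ▸ hAB hx), hBF x (hAB hx)⟩

end Semigroups

section UpperHalfBox

variable {n : ℕ}

/-- The points `x` of the box `[0, F]` with `F 0 < 2 * x 0`. -/
def upperHalfBox (F : Fin (n + 1) → ℕ) : Finset (Fin (n + 1) → ℕ) :=
  Fintype.piFinset (Fin.cons (Ioc (F 0 / 2) (F 0)) fun i => range (F i.succ + 1))

variable {F : Fin (n + 1) → ℕ}

theorem mem_upperHalfBox {x : Fin (n + 1) → ℕ} :
    x ∈ upperHalfBox F ↔ x ≤ F ∧ F 0 < 2 * x 0 := by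
  simp only [upperHalfBox, Fintype.mem_piFinset, Fin.forall_fin_succ, Fin.cons_zero,
    Fin.cons_succ, mem_Ioc, mem_range, Pi.le_def, Nat.lt_succ_iff]
  rw [show F 0 / 2 < x 0 ↔ F 0 < 2 * x 0 by omega]
  tauto

theorem card_upperHalfBox :
    #(upperHalfBox F) = (F 0 - F 0 / 2) * ∏ i : Fin n, (F i.succ + 1) := by
  simp [upperHalfBox, Fintype.card_piFinset, Fin.prod_univ_succ]

theorem not_add_le_of_mem_upperHalfBox {a b : Fin (n + 1) → ℕ} (ha : a ∈ upperHalfBox F)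
    (hb : b ∈ upperHalfBox F) : ¬ a + b ≤ F := fun hab => by
  have h0 : a 0 + b 0 ≤ F 0 := hab 0
  have ha0 := (mem_upperHalfBox.1 ha).2
  have hb0 := (mem_upperHalfBox.1 hb).2
  omega

end UpperHalfBox

theorem prod_add_one_le_prod_add_one {n : ℕ} (b : Fin (n + 1) → ℕ) :
    ∏ i, b i + 1 ≤ ∏ i, (b i + 1) := by
  have hle : ∏ i : Fin n, b i.succ ≤ ∏ i : Fin n, (b i.succ + 1) :=
    prod_le_prod' fun i _ => Nat.le_succ _
  have hpos : 0 < ∏ i : Fin n, (b i.succ + 1) := prod_pos fun i _ => Nat.succ_pos _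
  rw [Fin.prod_univ_succ, Fin.prod_univ_succ]
  nlinarith

theorem prod_le_two_mul_card_upperHalfBox_erase {n : ℕ} (F : Fin (n + 2) → ℕ) :
    ∏ i, F i ≤ 2 * #((upperHalfBox F).erase F) := by
  by_cases hzero : ∃ i, F i = 0
  · obtain ⟨i, hi⟩ := hzero
    simp [prod_eq_zero (mem_univ i) hi]
  push Not at hzero
  have hF0 := hzero 0
  have hFmem : F ∈ upperHalfBox F := mem_upperHalfBox.2 ⟨le_rfl, by omega⟩
  rw [card_erase_of_mem hFmem, card_upperHalfBox, Fin.prod_univ_succ]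
  set c := F 0 - F 0 / 2
  have hc : F 0 ≤ 2 * c := by omega
  have hc1 : 1 ≤ c := by omega
  have hP := prod_add_one_le_prod_add_one fun i => F i.succ
  have h1 : F 0 * ∏ i : Fin (n + 1), F i.succ ≤ 2 * (c * ∏ i : Fin (n + 1), F i.succ) := by
    rw [← mul_assoc]; exact Nat.mul_le_mul_right _ hc
  have h2 : c * ∏ i : Fin (n + 1), F i.succ + 1 ≤ c * ∏ i : Fin (n + 1), (F i.succ + 1) := by
    nlinarith [Nat.mul_le_mul_left c hP]
  omega

theorem sqrt_two_pow_prod_le_NF {n : ℕ} (F : Fin (n + 2) → ℕ) (hF : F ≠ 0) :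
    Real.sqrt 2 ^ (∏ i, F i) ≤ (NF F : ℝ) := by
  set B := (upperHalfBox F).erase F
  have hNF : 2 ^ #B ≤ NF F := by
    rw [← Set.ncard_coe_finset]
    refine two_pow_ncard_le_NF hF (fun x hx => (mem_upperHalfBox.1 (mem_of_mem_erase hx)).1)
      (fun a ha b hb => not_add_le_of_mem_upperHalfBox (mem_of_mem_erase ha)
        (mem_of_mem_erase hb)) (notMem_erase F _)
  calc Real.sqrt 2 ^ (∏ i, F i)
      ≤ Real.sqrt 2 ^ (2 * #B) :=
        pow_le_pow_right₀ Real.one_lt_sqrt_two.le (prod_le_two_mul_card_upperHalfBox_erase F)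
    _ = 2 ^ #B := by rw [pow_mul, Real.sq_sqrt zero_le_two]
    _ ≤ NF F := by exact_mod_cast hNF

/-- For every nonzero `F ∈ ℕ^5`, `(√2)^{F⁽¹⁾F⁽²⁾F⁽³⁾F⁽⁴⁾F⁽⁵⁾} ≤ N(F)`. -/
theorem lower_bound_dim_five (F : Fin 5 → ℕ) (hF : F ≠ 0) :
    Real.sqrt 2 ^ (∏ i, F i) ≤ (NF F : ℝ) :=
  sqrt_two_pow_prod_le_NF F hF
end

section
/- For every d ≥ 1 and every F ∈ ℕ^d, N(F) ≤ (√3)^{‖F‖}. -/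
open Finset

lemma gap_le_frob {d : ℕ} {S : Set (Fin d → ℕ)} {F x : Fin d → ℕ}
    (hS : IsFrobeniusGNS S F) (hx : x ∉ S) : x ≤ F := by
  obtain ⟨hGNS, hmax, huniq⟩ := hS
  obtain ⟨b, hxb, hb⟩ := Set.Finite.exists_le_maximal hGNS.2.2 hx
  have hb' : MaxGap S b := ⟨hb.1, fun y hy hby => le_antisymm (hb.2 hy hby) hby⟩
  rwa [huniq b hb'] at hxb

lemma not_both_mem {d : ℕ} {S : Set (Fin d → ℕ)} {F x : Fin d → ℕ}
    (hS : IsFrobeniusGNS S F) (hx : x ≤ F) (h1 : x ∈ S) (h2 : F - x ∈ S) : False := by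
  have hmem : x + (F - x) ∈ S := hS.1.2.1 x h1 _ h2
  have he : x + (F - x) = F := funext fun i => Nat.add_sub_cancel' (hx i)
  exact hS.2.1.1 (he ▸ hmem)

/-- For every `d ≥ 1` and every `F ∈ ℕ^d`, `N(F) ≤ (√3)^{‖F‖}`. -/
theorem upper_bound_sqrt_three (d : ℕ) (hd : 1 ≤ d) (F : Fin d → ℕ) :
    (NF F : ℝ) ≤ Real.sqrt 3 ^ normF F := by
  classical
  obtain ⟨t, ht⟩ := exists_injective_nat (Fin d → ℕ)
  set H : Finset (Fin d → ℕ) :=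
    (Finset.Iic F).filter (fun x => t x < t (F - x)) with hH
  -- basic facts about H
  have hHle : ∀ x ∈ H, x ≤ F := fun x hx => Finset.mem_Iic.mp (Finset.mem_filter.mp hx).1
  have hHlt : ∀ x ∈ H, t x < t (F - x) := fun x hx => (Finset.mem_filter.mp hx).2
  -- 2 * H.card ≤ normF F
  have hsubsub : ∀ x : Fin d → ℕ, x ≤ F → F - (F - x) = x :=
    fun x hx => funext fun i => Nat.sub_sub_self (hx i)
  have hinj : Set.InjOn (fun x => F - x) H := by
    intro a ha b hb hab
    have : F - (F - a) = F - (F - b) := by simp only [hab]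
    rwa [hsubsub a (hHle a ha), hsubsub b (hHle b hb)] at this
  have hcardim : (H.image (fun x => F - x)).card = H.card :=
    Finset.card_image_of_injOn hinj
  have hdisj : Disjoint H (H.image (fun x => F - x)) := by
    rw [Finset.disjoint_right]
    intro x hxim hxH
    obtain ⟨y, hy, rfl⟩ := Finset.mem_image.mp hxim
    have h1 := hHlt _ hxH
    rw [hsubsub y (hHle y hy)] at h1
    exact absurd (h1.trans (hHlt y hy)) (lt_irrefl _)
  have hsub : H ∪ H.image (fun x => F - x) ⊆ Finset.Iic F := by
    intro x hx
    rcases Finset.mem_union.mp hx with h | h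
    · exact (Finset.mem_filter.mp h).1
    · obtain ⟨y, hy, rfl⟩ := Finset.mem_image.mp h
      exact Finset.mem_Iic.mpr tsub_le_self
  have hIiccard : (Finset.Iic F).card = normF F := by
    rw [Pi.card_Iic]
    exact Finset.prod_congr rfl fun i _ => Nat.card_Iic (F i)
  have h2H : 2 * H.card ≤ normF F := by
    have := Finset.card_le_card hsub
    rw [Finset.card_union_of_disjoint hdisj, hcardim, hIiccard] at this
    omega
  -- injection from Frobenius GNS's into functions H → 3-element type
  have hcount : NF F ≤ 3 ^ H.card := by
    set P : Type := {p : Bool × Bool // p ≠ (true, true)} with hP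
    have hcardP : Nat.card (↥H → P) = 3 ^ H.card := by
      rw [Nat.card_eq_fintype_card, Fintype.card_fun, Fintype.card_coe]
      congr 1
    set f : {S : Set (Fin d → ℕ) // IsFrobeniusGNS S F} → (↥H → P) :=
      fun S x => ⟨(decide (x.1 ∈ S.1), decide ((F - x.1) ∈ S.1)), by
        intro hc
        have h1 : (x.1 : Fin d → ℕ) ∈ S.1 := of_decide_eq_true (congrArg Prod.fst hc)
        have h2 : F - (x.1 : Fin d → ℕ) ∈ S.1 := of_decide_eq_true (congrArg Prod.snd hc)
        exact not_both_mem S.2 (hHle x.1 x.2) h1 h2⟩ with hf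
    have hfinj : Function.Injective f := by
      have key : ∀ S₁ S₂ : {S : Set (Fin d → ℕ) // IsFrobeniusGNS S F},
          f S₁ = f S₂ → S₁.1 ⊆ S₂.1 := by
        intro S₁ S₂ hfeq x hx
        by_contra hx2
        have hxF : x ≤ F := gap_le_frob S₂.2 hx2
        have hiff : ∀ y : ↥H, (y.1 ∈ S₁.1 ↔ y.1 ∈ S₂.1) ∧ ((F - y.1) ∈ S₁.1 ↔ (F - y.1) ∈ S₂.1) := by
          intro y
          have := congrFun hfeq y
          have hval := congrArg Subtype.val this
          constructor
          · rw [← decide_eq_decide]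
            exact congrArg Prod.fst hval
          · rw [← decide_eq_decide]
            exact congrArg Prod.snd hval
        rcases lt_trichotomy (t x) (t (F - x)) with hlt | heq | hgt
        · have hxH : x ∈ H := Finset.mem_filter.mpr ⟨Finset.mem_Iic.mpr hxF, hlt⟩
          exact hx2 (((hiff ⟨x, hxH⟩).1).mp hx)
        · have hxe : x = F - x := ht heq
          have : x + x ∈ S₁.1 := S₁.2.1.2.1 x hx x hx
          have hF : x + x = F := by
            nth_rewrite 2 [hxe]
            exact funext fun i => Nat.add_sub_cancel' (hxF i)
          exact S₁.2.2.1.1 (hF ▸ this)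
        · have hyF : F - x ≤ F := tsub_le_self
          have hyH : F - x ∈ H := by
            refine Finset.mem_filter.mpr ⟨Finset.mem_Iic.mpr hyF, ?_⟩
            rwa [hsubsub x hxF]
          have := (hiff ⟨F - x, hyH⟩).2
          rw [hsubsub x hxF] at this
          exact hx2 (this.mp hx)
      intro S₁ S₂ h
      exact Subtype.ext (le_antisymm (key S₁ S₂ h) (key S₂ S₁ h.symm))
    have : Nat.card {S : Set (Fin d → ℕ) // IsFrobeniusGNS S F} ≤ Nat.card (↥H → P) :=
      Nat.card_le_card_of_injective f hfinj
    rw [hcardP] at this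
    unfold NF
    rw [← Nat.card_coe_set_eq]
    exact this
  -- conclude with real arithmetic
  have hsqrt3 : (1:ℝ) ≤ Real.sqrt 3 := by
    rw [show (1:ℝ) = Real.sqrt 1 from (Real.sqrt_one).symm]
    exact Real.sqrt_le_sqrt (by norm_num)
  calc (NF F : ℝ) ≤ ((3 ^ H.card : ℕ) : ℝ) := Nat.cast_le.mpr hcount
    _ = Real.sqrt 3 ^ (2 * H.card) := by
        rw [pow_mul, Real.sq_sqrt (by norm_num : (3:ℝ) ≥ 0)]
        push_cast; ring
    _ ≤ Real.sqrt 3 ^ normF F := pow_le_pow_right₀ hsqrt3 h2H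
end
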